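/- Let B be a d×d integer matrix which is expansive (every eigenvalue λ ∈ ℂ of B satisfies |λ| > 1), and let D ⊆ ℤ^d be a complete set of representatives of ℤ^d/Bℤ^d. Then every sequence x : ℕ → ℤ^d with x_k − B x_{k+1} ∈ D for all k ∈ ℕ is eventually periodic: there exist N ∈ ℕ and q ≥ 1 such that x_{k+q} = x_k for all k ≥ N. Consequently the associated digit string (x_k − B x_{k+1})_{k∈ℕ} ends in an infinitely repeated finite word. -/

import Mathlib

/-!
Over `ℂ`, the spectrum of `B⁻¹` lies in the open unit disc, so by Gelfand's formula the norms
`‖B⁻ⁿ‖` are summable. The digits `x_k - B x_{k+1}` come from `D`, which is finite because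
componentwise congruence modulo `det B` implies congruence modulo `Bℤ^d`. Unrolling
`x_{k+1} = B⁻¹ (x_k - d_k)` therefore bounds the orbit, which thus visits only finitely many lattice
points. Finally `x_{k+1}` is determined by `x_k`, since the digit is the unique representative of
`x_k` in `D`, so the first repetition makes the orbit periodic from then on.
-/

open Matrix

/-- A square integer matrix is expansive if all of its complex eigenvalues `μ`
satisfy `|μ| > 1`. -/
def Expansive {d : ℕ} (B : Matrix (Fin d) (Fin d) ℤ) : Prop :=
  ∀ μ : ℂ, (Matrix.charpoly (B.map (Int.cast : ℤ → ℂ))).IsRoot μ → 1 < ‖μ‖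

open Filter

theorem Function.exists_eventually_periodic_of_finite_range {α : Type*} {x : ℕ → α}
    (hfin : (Set.range x).Finite) (hstep : ∀ k l, x k = x l → x (k + 1) = x (l + 1)) :
    ∃ N q : ℕ, 1 ≤ q ∧ ∀ k, N ≤ k → x (k + q) = x k := by
  obtain ⟨a, b, hab, hxab⟩ := hfin.exists_lt_map_eq_of_forall_mem Set.mem_range_self
  have hshift : ∀ j, x (a + j + (b - a)) = x (a + j) := by
    intro j
    induction j with
    | zero => simpa [Nat.add_sub_cancel' hab.le] using hxab.symm
    | succ j ih => simpa [← add_assoc, add_right_comm _ 1] using hstep _ _ ih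
  refine ⟨a, b - a, by omega, fun k hk => ?_⟩
  obtain ⟨j, rfl⟩ := Nat.exists_eq_add_of_le hk
  exact hshift j

section

variable {n : Type*} [Fintype n] [DecidableEq n]

theorem Matrix.exists_mulVec_eq_of_forall_det_dvd {R : Type*} [CommRing R] (B : Matrix n n R)
    {v : n → R} (hv : ∀ i, B.det ∣ v i) : ∃ y, v = B *ᵥ y := by
  choose w hw using hv
  refine ⟨B.adjugate *ᵥ w, ?_⟩
  rw [mulVec_mulVec, mul_adjugate, smul_mulVec, one_mulVec]
  exact funext hw

theorem finite_of_pairwise_incongruent {B : Matrix n n ℤ} (hB : B.det ≠ 0) {D : Set (n → ℤ)}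
    (hD : ∀ v ∈ D, ∀ w ∈ D, (∃ y, v - w = B *ᵥ y) → v = w) : D.Finite := by
  refine Set.Finite.of_finite_image (f := fun v i => v i % B.det) ?_ ?_
  · refine (Set.Finite.pi fun _ => Set.finite_Ico 0 (B.det.natAbs : ℤ)).subset ?_
    rintro _ ⟨v, -, rfl⟩ i -
    exact ⟨Int.emod_nonneg _ hB, Int.emod_lt _ hB⟩
  · intro v hv w hw hvw
    exact hD v hv w hw <| B.exists_mulVec_eq_of_forall_det_dvd fun i =>
      (Int.ModEq.dvd (congrFun hvw i).symm)

theorem eq_of_sub_mulVec_mem {B : Matrix n n ℤ} (hB : B.det ≠ 0) {D : Set (n → ℤ)}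
    (hD : ∀ v ∈ D, ∀ w ∈ D, (∃ y, v - w = B *ᵥ y) → v = w) {x y z : n → ℤ}
    (hy : x - B *ᵥ y ∈ D) (hz : x - B *ᵥ z ∈ D) : y = z := by
  have hdigit := hD _ hy _ hz ⟨z - y, by rw [mulVec_sub]; abel⟩
  have hBy : B *ᵥ y = B *ᵥ z := sub_right_injective hdigit
  exact sub_eq_zero.mp (eq_zero_of_mulVec_eq_zero hB (by rw [mulVec_sub, hBy, sub_self]))

theorem Matrix.eq_pow_mulVec_sub_sum {R : Type*} [Ring R] (A : Matrix n n R) {y b : ℕ → n → R}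
    (hy : ∀ k, y (k + 1) = A *ᵥ (y k - b k)) (m : ℕ) :
    y m = (A ^ m) *ᵥ y 0 - ∑ i ∈ Finset.range m, (A ^ (i + 1)) *ᵥ b (m - (i + 1)) := by
  induction m with
  | zero => simp
  | succ m ih =>
    rw [hy, ih, Finset.sum_range_succ', mulVec_sub, mulVec_sub, mulVec_sum]
    simp only [mulVec_mulVec, ← pow_succ', Nat.add_sub_add_right, zero_add]
    rw [pow_one]
    abel

end

theorem summable_norm_pow_of_spectralRadius_lt_one {A : Type*} [NormedRing A] [NormedAlgebra ℂ A]
    [CompleteSpace A] {a : A} (ha : spectralRadius ℂ a < 1) : Summable fun m => ‖a ^ m‖ := by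
  obtain ⟨r, hρr, hr1⟩ := ENNReal.lt_iff_exists_nnreal_btwn.mp ha
  have hr1' : (r : ℝ) < 1 := by exact_mod_cast hr1
  refine (summable_geometric_of_lt_one r.2 hr1').of_norm_bounded_eventually_nat ?_
  filter_upwards
    [(spectrum.pow_nnnorm_pow_one_div_tendsto_nhds_spectralRadius a).eventually_lt_const hρr,
      eventually_gt_atTop 0] with m hm hm0
  rw [one_div, ENNReal.rpow_inv_lt_iff (by positivity), ENNReal.rpow_natCast] at hm
  rw [norm_norm]
  exact_mod_cast hm.le

theorem norm_le_norm_intCast_comp {n : Type*} [Fintype n] (v : n → ℤ) :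
    ‖v‖ ≤ ‖(Int.cast ∘ v : n → ℂ)‖ :=
  (pi_norm_le_iff_of_nonneg (norm_nonneg _)).mpr fun i => by
    simpa [Int.norm_eq_abs] using norm_le_pi_norm (Int.cast ∘ v : n → ℂ) i

section LinftyOpNorm

attribute [local instance] Matrix.linftyOpNormedRing Matrix.linftyOpNormedAlgebra

variable {n : Type*} [Fintype n] [DecidableEq n]

theorem spectralRadius_inv_lt_one [Nonempty n] (u : (Matrix n n ℂ)ˣ)
    (hu : ∀ μ : ℂ, (u : Matrix n n ℂ).charpoly.IsRoot μ → 1 < ‖μ‖) :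
    spectralRadius ℂ (↑u⁻¹ : Matrix n n ℂ) < 1 := by
  refine mod_cast spectrum.spectralRadius_lt_of_forall_lt _ fun z hz => ?_
  have hroot := hu z⁻¹ (mem_spectrum_iff_isRoot_charpoly.mp (spectrum.inv₀_mem_iff.mpr hz))
  rw [norm_inv, one_lt_inv_iff₀] at hroot
  exact_mod_cast hroot.2

theorem Matrix.exists_norm_le_of_recurrence {R : Type*} [NormedRing R] (A : Matrix n n R)
    (hA : Summable fun m => ‖A ^ m‖) {y b : ℕ → n → R} {K : ℝ} (hb : ∀ k, ‖b k‖ ≤ K)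
    (hy : ∀ k, y (k + 1) = A *ᵥ (y k - b k)) :
    ∃ C, ∀ m, ‖y m‖ ≤ C := by
  have hK : 0 ≤ K := (norm_nonneg _).trans (hb 0)
  have hA' : Summable fun m => ‖A ^ (m + 1)‖ := (summable_nat_add_iff 1).mpr hA
  refine ⟨(∑' m, ‖A ^ m‖) * ‖y 0‖ + (∑' m, ‖A ^ (m + 1)‖) * K, fun m => ?_⟩
  rw [A.eq_pow_mulVec_sub_sum hy m]
  refine (norm_sub_le _ _).trans (add_le_add ?_ ?_)
  · exact (linfty_opNorm_mulVec _ _).trans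
      (mul_le_mul_of_nonneg_right (hA.le_tsum m fun _ _ => norm_nonneg _) (norm_nonneg _))
  calc ‖∑ i ∈ Finset.range m, (A ^ (i + 1)) *ᵥ b (m - (i + 1))‖
      ≤ ∑ i ∈ Finset.range m, ‖A ^ (i + 1)‖ * K :=
        (norm_sum_le _ _).trans <| Finset.sum_le_sum fun i _ =>
          (linfty_opNorm_mulVec _ _).trans (mul_le_mul_of_nonneg_left (hb _) (norm_nonneg _))
    _ ≤ (∑' i, ‖A ^ (i + 1)‖) * K := by
        rw [← Finset.sum_mul]
        exact mul_le_mul_of_nonneg_right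
          (hA'.sum_le_tsum _ fun _ _ => norm_nonneg _) hK

namespace Expansive

variable {d : ℕ} {B : Matrix (Fin d) (Fin d) ℤ}

theorem isUnit_map (hB : Expansive B) : IsUnit (B.map (Int.cast : ℤ → ℂ)) := by
  by_contra h
  exact absurd (hB 0 (mem_spectrum_iff_isRoot_charpoly.mp ((spectrum.zero_mem_iff ℂ).mpr h)))
    (by simp)

theorem det_ne_zero (hB : Expansive B) : B.det ≠ 0 := by
  have := ((isUnit_iff_isUnit_det _).mp hB.isUnit_map).ne_zero
  rwa [← Int.cast_det, Int.cast_ne_zero] at this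

theorem finite_range [Nonempty (Fin d)] (hB : Expansive B) {D : Set (Fin d → ℤ)} (hD : D.Finite)
    {x : ℕ → Fin d → ℤ} (hx : ∀ k, x k - B *ᵥ x (k + 1) ∈ D) : (Set.range x).Finite := by
  obtain ⟨u, hu⟩ := hB.isUnit_map
  have hA := summable_norm_pow_of_spectralRadius_lt_one (spectralRadius_inv_lt_one u (hu ▸ hB))
  obtain ⟨K, hK⟩ := (hD.image fun v => ‖(Int.cast ∘ v : Fin d → ℂ)‖).bddAbove
  set y : ℕ → Fin d → ℂ := fun k => Int.cast ∘ x k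
  have hy : ∀ k, y (k + 1) = ↑u⁻¹ *ᵥ (y k - Int.cast ∘ (x k - B *ᵥ x (k + 1))) := by
    intro k
    have : y k - Int.cast ∘ (x k - B *ᵥ x (k + 1)) = (u : Matrix _ _ ℂ) *ᵥ y (k + 1) := by
      rw [hu]; funext i; simp [y, mulVec, dotProduct]
    rw [this, mulVec_mulVec, Units.inv_mul, one_mulVec]
  obtain ⟨C, hC⟩ := Matrix.exists_norm_le_of_recurrence _ hA (fun k => hK ⟨_, hx k, rfl⟩) hy
  refine ((isCompact_closedBall (0 : Fin d → ℤ) C).finite DiscreteTopology.isDiscrete).subset ?_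
  rintro _ ⟨k, rfl⟩
  simpa using (norm_le_norm_intCast_comp (x k)).trans (hC k)

end Expansive

end LinftyOpNorm

/-- for an expansive integer matrix B and a complete digit set D,
every sequence of integer points x with x_k − B x_{k+1} ∈ D is eventually
periodic, and consequently its digit string ends in an infinitely repeated
finite word. -/
theorem statement7 (d : ℕ) (hd : 0 < d) (B : Matrix (Fin d) (Fin d) ℤ)
    (hB : Expansive B) (D : Set (Fin d → ℤ))
    (hD : ∀ x : Fin d → ℤ, ∃! v : Fin d → ℤ, v ∈ D ∧ ∃ y : Fin d → ℤ, x - v = B.mulVec y)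
    (x : ℕ → Fin d → ℤ) (hx : ∀ k, x k - B.mulVec (x (k + 1)) ∈ D) :
    ∃ N q : ℕ, 1 ≤ q ∧ (∀ k, N ≤ k → x (k + q) = x k) ∧
      (∀ k, N ≤ k →
        x (k + q) - B.mulVec (x (k + q + 1)) = x k - B.mulVec (x (k + 1))) := by
  have : Nonempty (Fin d) := ⟨⟨0, hd⟩⟩
  have hincong : ∀ v ∈ D, ∀ w ∈ D, (∃ y, v - w = B *ᵥ y) → v = w :=
    fun v hv w hw ⟨y, hy⟩ => (hD v).unique ⟨hv, 0, by simp⟩ ⟨hw, y, hy⟩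
  have hfin := hB.finite_range (finite_of_pairwise_incongruent hB.det_ne_zero hincong) hx
  obtain ⟨N, q, hq, hper⟩ := Function.exists_eventually_periodic_of_finite_range hfin
    fun k l hkl => eq_of_sub_mulVec_mem hB.det_ne_zero hincong (hx k) (hkl ▸ hx l)
  refine ⟨N, q, hq, hper, fun k hk => ?_⟩
  rw [hper k hk, add_right_comm, hper (k + 1) (by omega)]
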